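/- arXiv:2009.00469 — 2 statements merged into one kernel-verified Lean document; each statement's English description precedes it below -/
import Mathlib

section
/- There exists a machine U such that for every machine V there is a constant c with D_U(x,y) ≤ D_V(x,y) + c for all binary strings x and y; that is, there is a machine making the plain information distance D_U minimal up to additive constants. -/
open scoped ENNReal

/-- Binary strings: finite sequences over `{0,1}`. -/
abbrev BStr : Type := List Bool

/-- The type of two-argument partial functions on binary strings. -/
abbrev PFun2 : Type := BStr → BStr →. BStr

/-- A machine is a partial computable function of two binary-string arguments. -/
def IsMachine (U : PFun2) : Prop := Partrec₂ U

/-- Conditional complexity `K_U(y|x) = min{|p| : U(p,x) = y}` (∞ if no program). -/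
noncomputable def Kcond (U : PFun2) (y x : BStr) : ℕ∞ :=
  sInf {n : ℕ∞ | ∃ p : BStr, (p.length : ℕ∞) = n ∧ y ∈ U p x}

/-- Information distance `D_U(x,y) = min{|p| : U(p,x) = y ∧ U(p,y) = x}` (∞ if no program). -/
noncomputable def IDist (U : PFun2) (x y : BStr) : ℕ∞ :=
  sInf {n : ℕ∞ | ∃ p : BStr, (p.length : ℕ∞) = n ∧ y ∈ U p x ∧ x ∈ U p y}

/-- `U` is an optimal machine for plain conditional complexity. -/
def OptimalPlainK (U : PFun2) : Prop :=
  IsMachine U ∧ ∀ V : PFun2, IsMachine V → ∃ c : ℕ, ∀ x y : BStr,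
    Kcond U y x ≤ Kcond V y x + (c : ℕ∞)

/-!
A universal machine reads a program of the form `1^e 0 q` as "run the machine with code `e`
on the program `q`". Every machine `V` is simulated by it on programs that are `e + 1` bits
longer, and a simulated program keeps both properties `V(q,x) = y` and `V(q,y) = x` at once,
so `D_U ≤ D_V + e + 1`.
-/

open Encodable Denumerable
open Nat.Partrec (Code)

def splitUnaryPrefix : BStr → ℕ × BStr := fun p =>
  p.rec (0, []) fun b l ih => cond b (ih.1 + 1, ih.2) (0, l)

theorem primrec_splitUnaryPrefix : Primrec splitUnaryPrefix := by
  have h := Primrec.list_rec (f := @id BStr) (g := fun _ => ((0 : ℕ), ([] : BStr)))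
    (h := fun (_ : BStr) (x : Bool × BStr × (ℕ × BStr)) =>
      cond x.1 (x.2.2.1 + 1, x.2.2.2) (0, x.2.1))
    Primrec.id (Primrec.const _)
    (Primrec.to₂ (Primrec.cond (Primrec.fst.comp Primrec.snd)
      ((Primrec.succ.comp (Primrec.fst.comp (Primrec.snd.comp (Primrec.snd.comp Primrec.snd)))).pair
        (Primrec.snd.comp (Primrec.snd.comp (Primrec.snd.comp Primrec.snd))))
      ((Primrec.const 0).pair (Primrec.fst.comp (Primrec.snd.comp Primrec.snd)))))
  exact h.of_eq fun p => by induction p <;> rfl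

@[simp]
theorem splitUnaryPrefix_replicate_append (e : ℕ) (q : BStr) :
    splitUnaryPrefix (List.replicate e true ++ false :: q) = (e, q) := by
  induction e with
  | zero => rfl
  | succ n ih => simp_all [List.replicate_succ, splitUnaryPrefix]

def universalMachine : PFun2 := fun p x =>
  ((ofNat Code (splitUnaryPrefix p).1).eval (encode ((splitUnaryPrefix p).2, x))).bind
    fun n => Part.ofOption (decode (α := BStr) n)

theorem isMachine_universalMachine : IsMachine universalMachine := by
  have hsplit := primrec_splitUnaryPrefix.comp (Primrec.fst (α := BStr) (β := BStr))
  refine Partrec.bind ?_ (Computable.ofOption (Computable.decode.comp Computable.snd))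
  exact Nat.Partrec.Code.eval_part.comp
    ((Computable.ofNat Code).comp (Primrec.fst.comp hsplit).to_comp)
    (Primrec.encode.comp ((Primrec.snd.comp hsplit).pair Primrec.snd)).to_comp

theorem IsMachine.exists_universalMachine_eq {V : PFun2} (hV : IsMachine V) :
    ∃ e : ℕ, ∀ q x : BStr, universalMachine (List.replicate e true ++ false :: q) x = V q x := by
  obtain ⟨c, hc⟩ := Nat.Partrec.Code.exists_code.1 hV
  refine ⟨encode c, fun q x => Part.ext fun z => ?_⟩
  simp [universalMachine, hc, encodek]

theorem IDist_le_add_of_simulation {U V : PFun2} {c : ℕ}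
    (hsim : ∀ q : BStr, ∃ p : BStr, p.length ≤ q.length + c ∧ ∀ x z, z ∈ V q x → z ∈ U p x)
    (x y : BStr) : IDist U x y ≤ IDist V x y + c := by
  rw [IDist, IDist, ENat.sInf_add]
  refine le_iInf₂ fun n ⟨q, hq, hyx, hxy⟩ => ?_
  obtain ⟨p, hlen, hUV⟩ := hsim q
  calc IDist U x y ≤ p.length := sInf_le ⟨p, rfl, hUV x y hyx, hUV y x hxy⟩
    _ ≤ n + c := by rw [← hq]; exact_mod_cast hlen

/-- there is a machine making the plain information distance `D_U`
minimal up to additive constants. -/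
theorem exists_optimal_plain_distance_machine :
    ∃ U : PFun2, IsMachine U ∧
      ∀ V : PFun2, IsMachine V → ∃ c : ℕ, ∀ x y : BStr,
        IDist U x y ≤ IDist V x y + (c : ℕ∞) := by
  refine ⟨universalMachine, isMachine_universalMachine, fun V hV => ?_⟩
  obtain ⟨e, he⟩ := hV.exists_universalMachine_eq
  exact ⟨e + 1, IDist_le_add_of_simulation fun q =>
    ⟨List.replicate e true ++ false :: q, by simp; omega, fun x z hz => by rwa [he]⟩⟩
end

section
/- Let Kprog(x|y) = min{ KP(q) : V(q,y) = x }, where V is a fixed machine optimal for plain conditional complexity and KP denotes unconditional prefix complexity (i.e., Kprog(x|y) is the minimal prefix complexity of a program that maps y to x). Then: (i) there is a constant c such that K(x|y) ≤ Kprog(x|y) + c for all binary strings x,y, where K is prefix conditional complexity; and (ii) for every constant c there exist binary strings x,y with Kprog(x|y) > K(x|y) + c; that is, the difference Kprog(x|y) − K(x|y) is unbounded. -/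
open scoped ENNReal

/-- A machine is prefix-free (in its first argument) if for each second argument `x`,
its domain contains no string that is a proper prefix of another element. -/
def PrefixFree (U : PFun2) : Prop :=
  ∀ (x p q : BStr), (U p x).Dom → (U q x).Dom → p <+: q → p = q

/-- A machine is prefix-stable (in its first argument) if whenever `U(p,x)` is defined
and `p` is a prefix of `p'`, then `U(p',x)` is defined and has the same value. -/
def PrefixStable (U : PFun2) : Prop :=
  ∀ (x p q y : BStr), p <+: q → y ∈ U p x → y ∈ U q x

/-- `U` is a prefix-free machine that is optimal for prefix conditional complexity
among prefix-free machines. -/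
def OptimalPrefixK (U : PFun2) : Prop :=
  IsMachine U ∧ PrefixFree U ∧ ∀ V : PFun2, IsMachine V → PrefixFree V →
    ∃ c : ℕ, ∀ x y : BStr, Kcond U y x ≤ Kcond V y x + (c : ℕ∞)

/-- `E(x,y) = max(K(x|y), K(y|x))`, computed with the machine `W`. -/
noncomputable def Emax (W : PFun2) (x y : BStr) : ℕ∞ :=
  max (Kcond W x y) (Kcond W y x)

/-- One-argument partial functions on binary strings. -/
abbrev PFun1 : Type := BStr →. BStr

/-- A one-argument machine is a partial computable function. -/
def IsMachine1 (W : PFun1) : Prop := Partrec W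

/-- A one-argument machine is prefix-free if its domain contains no string that is
a proper prefix of another element. -/
def PrefixFree1 (W : PFun1) : Prop :=
  ∀ p q : BStr, (W p).Dom → (W q).Dom → p <+: q → p = q

/-- Unconditional complexity `K_W(q) = min{|p| : W(p) = q}`. -/
noncomputable def Kun (W : PFun1) (q : BStr) : ℕ∞ :=
  sInf {n : ℕ∞ | ∃ p : BStr, (p.length : ℕ∞) = n ∧ q ∈ W p}

/-- `W` is a prefix-free one-argument machine optimal for (unconditional) prefix
complexity among prefix-free one-argument machines. -/
def OptimalPrefixKun (W : PFun1) : Prop :=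
  IsMachine1 W ∧ PrefixFree1 W ∧ ∀ W' : PFun1, IsMachine1 W' → PrefixFree1 W' →
    ∃ c : ℕ, ∀ q : BStr, Kun W q ≤ Kun W' q + (c : ℕ∞)

/-- `Kprog(x|y) = min{ KP(q) : V(q,y) = x }`: the minimal prefix complexity of a
program that maps `y` to `x` on the plain machine `V`. -/
noncomputable def Kprog (V : PFun2) (W : PFun1) (x y : BStr) : ℕ∞ :=
  sInf {m : ℕ∞ | ∃ q : BStr, x ∈ V q y ∧ Kun W q = m}

/-!
Part (i): decoding a `W`-program into a `V`-program and running that is itself a prefix-free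
machine, and its conditional complexity is at most `Kprog`.

Part (ii): for `|x| = n` we have `K(x | 0ⁿ) ≤ n + O(1)`, since the condition tells a prefix-free
machine where its program ends. A `W`-program for a `V`-program mapping `0ⁿ` to `x` gets no such
help: all of them lie in the single prefix-free domain of `W`. If `Kprog(x | 0ⁿ) ≤ n + k` for all
`x`, each length `n` needs `2ⁿ` distinct such programs of length `≤ n + k`; giving each weight
`2^-(n+k)` and summing over `n < N`, a program `p` is counted for lengths `n ≥ |p| - k` only, so
its total weight is `≤ 2 · 2^-|p|`, and Kraft's inequality yields `N ≤ 2^(k+1)` for every `N`.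
-/

open Finset InformationTheory

def IsPrefixCode {α : Type*} (S : Set (List α)) : Prop :=
  ∀ p ∈ S, ∀ q ∈ S, p <+: q → p = q

namespace IsPrefixCode

variable {α : Type*}

lemma subset {S T : Set (List α)} (hT : IsPrefixCode T) (hST : S ⊆ T) : IsPrefixCode S :=
  fun p hp q hq => hT p (hST hp) q (hST hq)

theorem uniquelyDecodable {S : Set (List α)} (hS : IsPrefixCode S) (hnil : [] ∉ S) :
    UniquelyDecodable S := by
  intro L₁
  induction L₁ with
  | nil =>
    rintro (_ | ⟨w, L₂⟩) - h₂ h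
    · rfl
    · have hw : w = [] := by simpa using (List.flatten_eq_nil_iff.mp h.symm) w (by simp)
      exact absurd (hw ▸ h₂ w (by simp)) hnil
  | cons w L₁ ih =>
    rintro (_ | ⟨w', L₂⟩) h₁ h₂ h
    · have hw : w = [] := by simpa using (List.flatten_eq_nil_iff.mp h) w (by simp)
      exact absurd (hw ▸ h₁ w (by simp)) hnil
    · simp only [List.flatten_cons] at h
      have hww' : w = w' := by
        rcases List.prefix_or_prefix_of_prefix (List.prefix_append w _)
            (h ▸ List.prefix_append w' _) with hp | hp
        · exact hS w (h₁ w (by simp)) w' (h₂ w' (by simp)) hp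
        · exact (hS w' (h₂ w' (by simp)) w (h₁ w (by simp)) hp).symm
      subst hww'
      rw [ih L₂ (fun v hv => h₁ v (by simp [hv])) (fun v hv => h₂ v (by simp [hv]))
        (List.append_cancel_left h)]

theorem sum_pow_length_le_one [Fintype α] [Nonempty α] {S : Finset (List α)}
    (hS : IsPrefixCode (S : Set (List α))) :
    ∑ w ∈ S, (1 / Fintype.card α : ℝ) ^ w.length ≤ 1 := by
  by_cases hnil : [] ∈ S
  · have : S = {[]} := eq_singleton_iff_unique_mem.mpr
      ⟨hnil, fun q hq => (hS [] hnil q hq List.nil_prefix).symm⟩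
    simp [this]
  · exact kraft_mcmillan_inequality (hS.uniquelyDecodable hnil)

end IsPrefixCode

theorem sum_half_pow_add_le {s : Finset ℕ} {m k : ℕ} (h : ∀ n ∈ s, m ≤ n + k) :
    ∑ n ∈ s, (1 / 2 : ℝ) ^ (n + k) ≤ 2 * (1 / 2) ^ m := by
  have hmap := sum_map s (addRightEmbedding k) (fun n => (1 / 2 : ℝ) ^ n)
  simp only [addRightEmbedding_apply] at hmap
  rw [← hmap]
  set t := s.map (addRightEmbedding k)
  have hsub : t ⊆ Ico m (t.sup id + 1) := by
    intro n hn
    obtain ⟨n', hn', rfl⟩ := mem_map.mp hn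
    simp only [mem_Ico, addRightEmbedding_apply]
    exact ⟨h n' hn', Nat.lt_succ_of_le (le_sup (f := id) hn)⟩
  calc _ ≤ ∑ n ∈ Ico m (t.sup id + 1), (1 / 2 : ℝ) ^ n :=
        sum_le_sum_of_subset_of_nonneg hsub (fun _ _ _ => by positivity)
    _ ≤ (1 / 2) ^ m / (1 - 1 / 2) := geom_sum_Ico_le_of_lt_one (by norm_num) (by norm_num)
    _ = 2 * (1 / 2) ^ m := by ring

theorem le_two_pow_of_prefixCode_family {D : Set (List Bool)} (hD : IsPrefixCode D)
    {A : ℕ → Finset (List Bool)} (hAD : ∀ n, ↑(A n) ⊆ D) (hcard : ∀ n, 2 ^ n ≤ #(A n)) {k : ℕ}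
    (hlen : ∀ n, ∀ p ∈ A n, p.length ≤ n + k) (N : ℕ) : N ≤ 2 ^ (k + 1) := by
  set B := (range N).biUnion A
  have hBD : ↑B ⊆ D := by simpa [B] using fun n _ => hAD n
  have hkraft : ∑ p ∈ B, (1 / 2 : ℝ) ^ p.length ≤ 1 := by
    simpa using (hD.subset hBD).sum_pow_length_le_one
  have hmass : (N : ℝ) * (1 / 2) ^ k ≤ 2 :=
    calc (N : ℝ) * (1 / 2) ^ k = ∑ n ∈ range N, (2 : ℝ) ^ n * (1 / 2) ^ (n + k) := by
          simp only [pow_add, ← mul_assoc, ← mul_pow]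
          simp
      _ ≤ ∑ n ∈ range N, ∑ _p ∈ A n, (1 / 2 : ℝ) ^ (n + k) := by
          gcongr with n
          rw [sum_const, nsmul_eq_mul]
          gcongr
          exact_mod_cast hcard n
      _ = ∑ p ∈ B, ∑ n ∈ (range N).filter (p ∈ A ·), (1 / 2 : ℝ) ^ (n + k) :=
          sum_comm' fun n p => by simp only [B, mem_biUnion, mem_filter]; grind
      _ ≤ ∑ p ∈ B, 2 * (1 / 2 : ℝ) ^ p.length :=
          sum_le_sum fun p _ => sum_half_pow_add_le fun n hn => hlen n p (mem_filter.mp hn).2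
      _ ≤ 2 := by rw [← mul_sum]; linarith
  have : (N : ℝ) ≤ 2 ^ (k + 1) := by
    rw [one_div, inv_pow, ← div_eq_mul_inv, div_le_iff₀ (by positivity)] at hmass
    rwa [pow_succ']
  exact_mod_cast this

section Machines

variable {M : PFun2} {x y : BStr}

lemma Kcond_le_length {p : BStr} (h : x ∈ M p y) : Kcond M x y ≤ p.length :=
  sInf_le ⟨p, rfl, h⟩

lemma exists_program_of_Kcond_le {k : ℕ} (h : Kcond M x y ≤ k) :
    ∃ p, x ∈ M p y ∧ p.length ≤ k := by
  have hne : {n : ℕ∞ | ∃ p : BStr, (p.length : ℕ∞) = n ∧ x ∈ M p y}.Nonempty := by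
    by_contra hempty
    simp [Kcond, Set.not_nonempty_iff_eq_empty.mp hempty] at h
  obtain ⟨p, hp, hx⟩ := csInf_mem hne
  exact ⟨p, hx, by exact_mod_cast hp.trans_le h⟩

lemma PrefixFree.of_dom_subset {D : Set BStr} (hD : IsPrefixCode D)
    (hMD : ∀ p y, (M p y).Dom → p ∈ D) : PrefixFree M :=
  fun y p q hp hq => hD p (hMD p y hp) q (hMD q y hq)

theorem exists_lt_Kcond_replicate {D : Set BStr} (hD : IsPrefixCode D)
    (hMD : ∀ p y, (M p y).Dom → p ∈ D) (k : ℕ) :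
    ∃ x : BStr, ((x.length + k : ℕ) : ℕ∞) < Kcond M x (List.replicate x.length false) := by
  by_contra! hshort
  choose P hPM hPlen using fun x => exists_program_of_Kcond_le (hshort x)
  let A n := univ.image fun v : List.Vector Bool n => P v.toList
  have hinj : ∀ n, Function.Injective fun v : List.Vector Bool n => P v.toList := by
    intro n v w (hvw : P v.toList = P w.toList)
    have hv := hPM v.toList
    have hw := hPM w.toList
    simp only [List.Vector.toList_length] at hv hw
    exact List.Vector.toList_injective (Part.mem_unique hv (hvw ▸ hw))
  have hcard : ∀ n, 2 ^ n ≤ #(A n) := fun n => by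
    simp [A, card_image_of_injective _ (hinj n), card_vector]
  have hAD : ∀ n, ↑(A n) ⊆ D := by
    intro n p hp
    obtain ⟨v, -, rfl⟩ := mem_image.mp hp
    exact hMD _ _ (Part.dom_iff_mem.mpr ⟨_, hPM v.toList⟩)
  have hlen : ∀ n, ∀ p ∈ A n, p.length ≤ n + k := by
    intro n p hp
    obtain ⟨v, -, rfl⟩ := mem_image.mp hp
    simpa using hPlen v.toList
  have := le_two_pow_of_prefixCode_family hD hAD hcard hlen (2 ^ (k + 1) + 1)
  omega

end Machines

section Composition

variable {V : PFun2} {W : PFun1}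

def progMachine (V : PFun2) (W : PFun1) : PFun2 := fun p y => (W p).bind fun q => V q y

lemma isMachine_progMachine (hV : IsMachine V) (hW : IsMachine1 W) :
    IsMachine (progMachine V W) :=
  Partrec.bind (hW.comp Computable.fst)
    (hV.comp Computable.snd (Computable.snd.comp Computable.fst))

lemma progMachine_dom {p y : BStr} (h : (progMachine V W p y).Dom) : (W p).Dom :=
  (Part.bind_dom.mp h).fst

lemma Kcond_progMachine_le (x y : BStr) : Kcond (progMachine V W) x y ≤ Kprog V W x y := by
  refine le_sInf ?_
  rintro _ ⟨q, hxq, rfl⟩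
  refine le_sInf ?_
  rintro _ ⟨p, rfl, hqp⟩
  exact Kcond_le_length (Part.mem_bind_iff.mpr ⟨q, hqp, hxq⟩)

end Composition

section Copy

def copyMachine : PFun2 := fun p z =>
  ((if p.length = z.length then some p else none : Option BStr) : Part BStr)

lemma isMachine_copyMachine : IsMachine copyMachine := by
  have hlen : PrimrecPred fun a : BStr × BStr => a.1.length = a.2.length :=
    Primrec.eq.comp (Primrec.list_length.comp Primrec.fst) (Primrec.list_length.comp Primrec.snd)
  exact Computable.ofOption <| Primrec.to_comp <|
    Primrec.ite hlen (Primrec.option_some.comp Primrec.fst) (Primrec.const none)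

lemma length_eq_of_copyMachine_dom {p z : BStr} (h : (copyMachine p z).Dom) :
    p.length = z.length := by
  by_contra hne
  simp [copyMachine, hne] at h

lemma prefixFree_copyMachine : PrefixFree copyMachine := fun _ _ _ hp hq hpq =>
  hpq.eq_of_length ((length_eq_of_copyMachine_dom hp).trans (length_eq_of_copyMachine_dom hq).symm)

lemma Kcond_copyMachine_le {x y : BStr} (h : x.length = y.length) :
    Kcond copyMachine x y ≤ x.length :=
  Kcond_le_length (by simp [copyMachine, h])

end Copy

/-- prefix conditional complexity is bounded by the minimal prefix
complexity of a program mapping `y` to `x`, but the difference is unbounded. -/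
theorem Kprog_vs_prefix_conditional
    (V : PFun2) (hV : OptimalPlainK V)
    (U : PFun2) (hU : OptimalPrefixK U)
    (W : PFun1) (hW : OptimalPrefixKun W) :
    (∃ c : ℕ, ∀ x y : BStr, Kcond U x y ≤ Kprog V W x y + (c : ℕ∞)) ∧
    (∀ c : ℕ, ∃ x y : BStr, Kcond U x y + (c : ℕ∞) < Kprog V W x y) := by
  obtain ⟨hVm, -⟩ := hV
  obtain ⟨-, -, hUopt⟩ := hU
  obtain ⟨hWm, hWpf, -⟩ := hW
  have hWdom : IsPrefixCode {p | (W p).Dom} := fun p hp q hq => hWpf p q hp hq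
  refine ⟨?_, fun c => ?_⟩
  · obtain ⟨c, hc⟩ := hUopt _ (isMachine_progMachine hVm hWm)
      (PrefixFree.of_dom_subset hWdom fun _ _ => progMachine_dom)
    exact ⟨c, fun x y => (hc y x).trans (add_le_add_left (Kcond_progMachine_le x y) _)⟩
  · obtain ⟨d, hd⟩ := hUopt copyMachine isMachine_copyMachine prefixFree_copyMachine
    obtain ⟨x, hx⟩ := exists_lt_Kcond_replicate hWdom (fun _ _ => progMachine_dom) (c + d)
    refine ⟨x, List.replicate x.length false, ?_⟩
    calc Kcond U x _ + c ≤ Kcond copyMachine x _ + d + c := by gcongr; exact hd _ _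
      _ ≤ x.length + d + c := by gcongr; exact Kcond_copyMachine_le (by simp)
      _ = ((x.length + (c + d) : ℕ) : ℕ∞) := by push_cast; ring
      _ < Kcond (progMachine V W) x _ := hx
      _ ≤ Kprog V W x _ := Kcond_progMachine_le x _
end
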